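/- arXiv:0909.2670 — 2 statements merged into one kernel-verified Lean document; each statement's English description precedes it below -/
import Mathlib

section
/- Suppose Φ separates V₂. Let n ≥ 1 and let τ ∈ H^{⊗n} be fixed by the diagonal action of g_{f, id_{V₃}} for every f ∈ Φ. Then for every string j ∈ {1,2}ⁿ (no entry equal to 3) having at least one entry equal to 2, the component τ_j ∈ V(j) is zero. (This is the key vanishing step in the proof of Theorem 2.5 of the paper in the top-weight case s = n: an invariant cycle has no components involving the complement V₂ of W₁H + H^{SMT} in strings of maximal weight.) -/
/-!
Context: `K` a field, `V₁, V₂, V₃` finite-dimensional `K`-vector spaces,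
`H = V₁ × V₂ × V₃`, `G_c ≤ GL(V₃)`, `Φ ≤ Hom_K(V₂,V₃)` additive and stable under
composition with `G_c`, `g_{f,S} : (v₁,v₂,v₃) ↦ (v₁, v₂, f v₂ + S v₃)`,
`G = { g_{f,S} : f ∈ Φ, S ∈ G_c }`.  `Φ` separates `V₂` if every nonzero `u ∈ V₂` has
`f ∈ Φ` with `f u ≠ 0`.  Strings `j ∈ {1,2,3}ⁿ` are encoded as `j : Fin n → Fin 3`
(`0` ↦ `V₁`, `1` ↦ `V₂`, `2` ↦ `V₃`); components `τ_j` of `τ` in `H^{⊗n} = ⊕_j V(j)` are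
encoded by quantifying over families `c j ∈ V(j)` with `∑ j, c j = τ`.

Statement 7: suppose `Φ` separates `V₂`.  Let `n ≥ 1` and let `τ ∈ H^{⊗n}` be fixed by the
diagonal action of `g_{f, id}` for every `f ∈ Φ`.  Then for every string `j ∈ {1,2}ⁿ`
(no entry equal to `3`, i.e. `∀ i, j i ≠ 2`) having at least one entry equal to `2`
(i.e. `∃ i, j i = 1`), the component `τ_j ∈ V(j)` is zero.
-/

open scoped TensorProduct

/-- The automorphism `g_{f,S} : (v₁,v₂,v₃) ↦ (v₁, v₂, f v₂ + S v₃)` of `H = V₁ × V₂ × V₃`. -/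
def gfs {K : Type*} [Field K] {V₁ V₂ V₃ : Type*}
    [AddCommGroup V₁] [Module K V₁] [AddCommGroup V₂] [Module K V₂]
    [AddCommGroup V₃] [Module K V₃]
    (f : V₂ →ₗ[K] V₃) (S : V₃ ≃ₗ[K] V₃) :
    (V₁ × V₂ × V₃) ≃ₗ[K] (V₁ × V₂ × V₃) where
  toFun v := (v.1, v.2.1, f v.2.1 + S v.2.2)
  invFun v := (v.1, v.2.1, S.symm (v.2.2 - f v.2.1))
  map_add' a b := by ext <;> simp <;> abel
  map_smul' c a := by ext <;> simp
  left_inv v := by simp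
  right_inv v := by simp

/-- The set `G = { g_{f,S} : f ∈ Φ, S ∈ G_c } ⊆ GL(H)`. -/
def Gset {K : Type*} [Field K] {V₁ V₂ V₃ : Type*}
    [AddCommGroup V₁] [Module K V₁] [AddCommGroup V₂] [Module K V₂]
    [AddCommGroup V₃] [Module K V₃]
    (Gc : Subgroup (V₃ ≃ₗ[K] V₃)) (Φ : AddSubgroup (V₂ →ₗ[K] V₃)) :
    Set ((V₁ × V₂ × V₃) ≃ₗ[K] (V₁ × V₂ × V₃)) :=
  {x | ∃ f ∈ Φ, ∃ S ∈ Gc, x = gfs f S}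

section TensorPowerSetup

variable {K : Type*} [Field K] {V₁ V₂ V₃ : Type*}
  [AddCommGroup V₁] [Module K V₁] [AddCommGroup V₂] [Module K V₂]
  [AddCommGroup V₃] [Module K V₃]

/-- The three summands `V₁ × 0 × 0`, `0 × V₂ × 0`, `0 × 0 × V₃` of `H = V₁ × V₂ × V₃`,
indexed by `Fin 3` (so index `0` corresponds to `V₁`, `1` to `V₂` and `2` to `V₃`). -/
def sel (K : Type*) [Field K] (V₁ V₂ V₃ : Type*)
    [AddCommGroup V₁] [Module K V₁] [AddCommGroup V₂] [Module K V₂]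
    [AddCommGroup V₃] [Module K V₃] :
    Fin 3 → Submodule K (V₁ × V₂ × V₃)
  | 0 => (⊤ : Submodule K V₁).prod (((⊥ : Submodule K V₂)).prod (⊥ : Submodule K V₃))
  | 1 => (⊥ : Submodule K V₁).prod (((⊤ : Submodule K V₂)).prod (⊥ : Submodule K V₃))
  | 2 => (⊥ : Submodule K V₁).prod (((⊥ : Submodule K V₂)).prod (⊤ : Submodule K V₃))

/-- For a string `j : Fin n → Fin 3`, the subspace `V(j) = V_{j 0} ⊗ ⋯ ⊗ V_{j (n-1)}` of
`H^{⊗n}`, realized as the span of the pure tensors whose `i`-th entry lies in the `j i`-th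
summand of `H` (via the canonical inclusions `V_i ↪ H`). -/
def Vstr {n : ℕ} (j : Fin n → Fin 3) :
    Submodule K (⨂[K] (_ : Fin n), (V₁ × V₂ × V₃)) :=
  Submodule.span K
    {x | ∃ v : Fin n → V₁ × V₂ × V₃,
      (∀ i, v i ∈ sel K V₁ V₂ V₃ (j i)) ∧ x = PiTensorProduct.tprod K v}

/-- The diagonal action of `g ∈ GL(H)` on `H^{⊗n}`, with `g` acting as `g^{⊗n}`. -/
noncomputable def actDiag (n : ℕ) (g : (V₁ × V₂ × V₃) ≃ₗ[K] (V₁ × V₂ × V₃)) :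
    (⨂[K] (_ : Fin n), (V₁ × V₂ × V₃)) →ₗ[K] ⨂[K] (_ : Fin n), (V₁ × V₂ × V₃) :=
  PiTensorProduct.map fun _ => g.toLinearMap

/-- The action of `S ∈ GL(V₃)` on `H^{⊗n}`, acting factorwise as the identity on the `V₁`-
and `V₂`-components and as `S` on the `V₃`-component; on the subspace `V(j)` this is exactly
the action of `S` on the tensor factors with `j i = 2` (i.e. the `V₃`-factors) and the
identity on all other factors. -/
noncomputable def actS (n : ℕ) (S : V₃ ≃ₗ[K] V₃) :
    (⨂[K] (_ : Fin n), (V₁ × V₂ × V₃)) →ₗ[K] ⨂[K] (_ : Fin n), (V₁ × V₂ × V₃) :=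
  PiTensorProduct.map fun _ =>
    LinearMap.prodMap LinearMap.id (LinearMap.prodMap LinearMap.id S.toLinearMap)

end TensorPowerSetup

/-!
Write `g_{f,1} = 1 + e_f` with `e_f (v₁, v₂, v₃) = (0, 0, f v₂)` and let `P_j` be the projection
of `H^{⊗n}` onto `V(j)` along the other summands. Let `j` have no entry `3` and `j i₀ = 2`, and
let `j'` be `j` with its `i₀`-th entry replaced by `3`. The projections of `H` onto `V₁` and `V₂`
do not see `e_f`, so `P_{j'} ∘ g_{f,1}^{⊗n} = P_{j'} + (e_f at i₀) ∘ P_j`, and invariance of `τ`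
gives `(e_f at i₀) τ_j = 0` for every `f ∈ Φ`. Since `V₂` is finite-dimensional, finitely many
`f_k ∈ Φ` already separate it, so `∑ₖ g_k ∘ f_k = 1` for some `g_k : V₃ → V₂`; then
`τ_j = ∑ₖ (g_k at i₀) ((e_{f_k} at i₀) τ_j) = 0`.
-/

open Function PiTensorProduct

namespace PiTensorProduct

variable {ι R : Type*} [CommSemiring R] {M N : ι → Type*}
  [∀ i, AddCommMonoid (M i)] [∀ i, Module R (M i)]
  [∀ i, AddCommMonoid (N i)] [∀ i, Module R (N i)]

theorem map_eq_map_of_eqOn {W : ∀ i, Submodule R (M i)} {q p : ∀ i, M i →ₗ[R] N i}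
    (h : ∀ i, Set.EqOn (q i) (p i) (W i)) {x : ⨂[R] i, M i}
    (hx : x ∈ Submodule.span R {x | ∃ v : ∀ i, M i, (∀ i, v i ∈ W i) ∧ x = tprod R v}) :
    map q x = map p x := by
  induction hx using Submodule.span_induction with
  | mem x hx =>
    obtain ⟨v, hv, rfl⟩ := hx
    simp only [map_tprod]
    exact congrArg (tprod R) (funext fun i => h i (hv i))
  | zero => simp
  | add x y _ _ hx hy => simp [hx, hy]
  | smul a x _ hx => simp [hx]

variable [DecidableEq ι]

noncomputable def mapAt (i : ι) (a : M i →ₗ[R] M i) : (⨂[R] i, M i) →ₗ[R] ⨂[R] i, M i :=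
  map (update (fun _ => LinearMap.id) i a)

theorem mapAt_comp_map (q : ∀ i, M i →ₗ[R] N i) (i : ι) (a : N i →ₗ[R] N i) :
    mapAt i a ∘ₗ map q = map (update q i (a ∘ₗ q i)) := by
  rw [mapAt, ← map_comp]
  congr 1
  funext k
  rcases eq_or_ne k i with rfl | hk
  · simp
  · simp [hk]

theorem mapAt_comp_mapAt (i : ι) (a b : M i →ₗ[R] M i) :
    mapAt i a ∘ₗ mapAt i b = mapAt i (a ∘ₗ b) := by
  have h := mapAt_comp_map (update (fun _ => LinearMap.id) i b) i a
  rwa [update_idem, update_self] at h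

theorem sum_mapAt {α : Type*} (s : Finset α) (i : ι) (a : α → M i →ₗ[R] M i) :
    ∑ k ∈ s, mapAt i (a k) = mapAt i (∑ k ∈ s, a k) :=
  ((mapMultilinear R M M).map_update_sum s i a _).symm

end PiTensorProduct

theorem LinearMap.exists_finset_separating {R M N : Type*} [Ring R] [AddCommGroup M]
    [Module R M] [IsArtinian R M] [AddCommGroup N] [Module R N] {Φ : Set (M →ₗ[R] N)}
    (hΦ : ∀ u, u ≠ 0 → ∃ f ∈ Φ, f u ≠ 0) :
    ∃ s : Finset (M →ₗ[R] N), ↑s ⊆ Φ ∧ ∀ u, (∀ f ∈ s, f u = 0) → u = 0 := by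
  classical
  obtain ⟨_, ⟨s, hsΦ, rfl⟩, hmin⟩ := (wellFounded_lt (α := Submodule R M)).has_min
    {W | ∃ s : Finset (M →ₗ[R] N), ↑s ⊆ Φ ∧ W = ⨅ f ∈ s, ker f} ⟨⊤, ∅, by simp, by simp⟩
  refine ⟨s, hsΦ, fun u hu => by_contra fun hu0 => ?_⟩
  obtain ⟨f, hfΦ, hfu⟩ := hΦ u hu0
  refine hmin _ ⟨insert f s, by simpa [Set.insert_subset_iff] using ⟨hfΦ, hsΦ⟩, rfl⟩ ?_
  rw [Finset.iInf_insert]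
  refine inf_lt_right.2 fun hle => hfu ?_
  exact hle (by simpa [Submodule.mem_iInf] using hu)

theorem LinearMap.exists_sum_comp_eq_id {K V W ι : Type*} [Field K] [AddCommGroup V]
    [Module K V] [AddCommGroup W] [Module K W] [Fintype ι] [DecidableEq ι]
    {f : ι → V →ₗ[K] W} (hf : ∀ u, (∀ k, f k u = 0) → u = 0) :
    ∃ g : ι → W →ₗ[K] V, ∑ k, g k ∘ₗ f k = LinearMap.id := by
  obtain ⟨G, hG⟩ := (LinearMap.pi f).exists_leftInverse_of_injective
    (LinearMap.ker_eq_bot'.2 fun u hu => hf u fun k => congrFun hu k)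
  refine ⟨fun k => G ∘ₗ LinearMap.single K (fun _ => W) k, ?_⟩
  rw [← hG]
  ext u
  simp [← map_sum, Finset.univ_sum_single]
  rfl

section Summands

variable {K : Type*} [Field K] {V₁ V₂ V₃ : Type*}
  [AddCommGroup V₁] [Module K V₁] [AddCommGroup V₂] [Module K V₂]
  [AddCommGroup V₃] [Module K V₃]

variable (K) in
def projSummand : Fin 3 → (V₁ × V₂ × V₃) →ₗ[K] (V₁ × V₂ × V₃)
  | 0 => LinearMap.prodMap LinearMap.id 0
  | 1 => LinearMap.prodMap 0 (LinearMap.prodMap LinearMap.id 0)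
  | 2 => LinearMap.prodMap 0 (LinearMap.prodMap 0 LinearMap.id)

@[simp] theorem projSummand_zero_apply (v : V₁ × V₂ × V₃) :
    projSummand K 0 v = (v.1, 0, 0) := rfl

@[simp] theorem projSummand_one_apply (v : V₁ × V₂ × V₃) :
    projSummand K 1 v = (0, v.2.1, 0) := rfl

@[simp] theorem projSummand_two_apply (v : V₁ × V₂ × V₃) :
    projSummand K 2 v = (0, 0, v.2.2) := rfl

def offDiag₃₂ (f : V₂ →ₗ[K] V₃) : (V₁ × V₂ × V₃) →ₗ[K] (V₁ × V₂ × V₃) :=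
  LinearMap.prodMap 0 ((LinearMap.inr K V₂ V₃) ∘ₗ f ∘ₗ LinearMap.fst K V₂ V₃)

def offDiag₂₃ (g : V₃ →ₗ[K] V₂) : (V₁ × V₂ × V₃) →ₗ[K] (V₁ × V₂ × V₃) :=
  LinearMap.prodMap 0 ((LinearMap.inl K V₂ V₃) ∘ₗ g ∘ₗ LinearMap.snd K V₂ V₃)

@[simp] theorem offDiag₃₂_apply (f : V₂ →ₗ[K] V₃) (v : V₁ × V₂ × V₃) :
    offDiag₃₂ f v = (0, 0, f v.2.1) := rfl

@[simp] theorem offDiag₂₃_apply (g : V₃ →ₗ[K] V₂) (v : V₁ × V₂ × V₃) :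
    offDiag₂₃ g v = (0, g v.2.2, 0) := rfl

theorem projSummand_apply_of_mem {a b : Fin 3} {w : V₁ × V₂ × V₃}
    (hw : w ∈ sel K V₁ V₂ V₃ a) : projSummand K b w = if b = a then w else 0 := by
  obtain ⟨w₁, w₂, w₃⟩ := w
  fin_cases a <;> fin_cases b <;> simp_all [sel, Submodule.mem_prod]

theorem projSummand_comp_self (a : Fin 3) :
    projSummand K a ∘ₗ projSummand K a = (projSummand K a : (V₁ × V₂ × V₃) →ₗ[K] _) := by
  fin_cases a <;> ext <;> simp

theorem projSummand_comp_gfs_one_of_ne_two {a : Fin 3} (ha : a ≠ 2) (f : V₂ →ₗ[K] V₃) :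
    projSummand K a ∘ₗ (gfs (V₁ := V₁) f 1).toLinearMap = projSummand K a := by
  fin_cases a <;> first | exact absurd rfl ha | ext <;> simp [gfs]

theorem projSummand_two_comp_gfs_one (f : V₂ →ₗ[K] V₃) :
    projSummand K 2 ∘ₗ (gfs (V₁ := V₁) f 1).toLinearMap = projSummand K 2 + offDiag₃₂ f := by
  ext <;> simp [gfs, add_comm]

theorem offDiag₃₂_comp_projSummand_one (f : V₂ →ₗ[K] V₃) :
    offDiag₃₂ f ∘ₗ projSummand K 1 = (offDiag₃₂ f : (V₁ × V₂ × V₃) →ₗ[K] _) := by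
  ext <;> simp

theorem sum_offDiag₂₃_comp_offDiag₃₂ {ι : Type*} [Fintype ι] {g : ι → V₃ →ₗ[K] V₂}
    {f : ι → V₂ →ₗ[K] V₃} (hgf : ∑ k, g k ∘ₗ f k = LinearMap.id) :
    ∑ k, offDiag₂₃ (g k) ∘ₗ offDiag₃₂ (f k) = (projSummand K 1 : (V₁ × V₂ × V₃) →ₗ[K] _) := by
  ext v <;> simp [Prod.fst_sum, Prod.snd_sum]
  simpa using LinearMap.congr_fun hgf v

end Summands

section Components

variable {K : Type*} [Field K] {V₁ V₂ V₃ : Type*}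
  [AddCommGroup V₁] [Module K V₁] [AddCommGroup V₂] [Module K V₂]
  [AddCommGroup V₃] [Module K V₃] {n : ℕ}

noncomputable def componentProj (j : Fin n → Fin 3) :
    (⨂[K] (_ : Fin n), (V₁ × V₂ × V₃)) →ₗ[K] ⨂[K] (_ : Fin n), (V₁ × V₂ × V₃) :=
  map fun i => projSummand K (j i)

theorem componentProj_apply_of_mem {j j' : Fin n → Fin 3}
    {x : ⨂[K] (_ : Fin n), (V₁ × V₂ × V₃)} (hx : x ∈ Vstr j') :
    componentProj j x = if j = j' then x else 0 := by
  split_ifs with hjj'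
  · subst hjj'
    have h := map_eq_map_of_eqOn (p := fun _ => LinearMap.id)
      (fun i w hw => by simpa using projSummand_apply_of_mem (b := j i) hw) hx
    rwa [map_id, LinearMap.id_apply] at h
  · obtain ⟨i, hi⟩ := ne_iff.1 hjj'
    have h := map_eq_map_of_eqOn (q := fun i => projSummand K (j i))
      (p := update (fun i => projSummand K (j i)) i 0)
      (fun k w hw => by
        rcases eq_or_ne k i with rfl | hk
        · simpa [hi] using projSummand_apply_of_mem (b := j k) hw
        · simp [hk]) hx
    rw [componentProj, h, ← mapMultilinear_apply, MultilinearMap.map_update_zero,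
      LinearMap.zero_apply]

theorem componentProj_sum {c : (Fin n → Fin 3) → ⨂[K] (_ : Fin n), (V₁ × V₂ × V₃)}
    (hc : ∀ j, c j ∈ Vstr j) (j : Fin n → Fin 3) : componentProj j (∑ j', c j') = c j := by
  simp [map_sum, componentProj_apply_of_mem (hc _)]

theorem componentProj_update_comp_actDiag_gfs_one {j : Fin n → Fin 3} {i₀ : Fin n}
    (hj2 : ∀ i, j i ≠ 2) (hj1 : j i₀ = 1) (f : V₂ →ₗ[K] V₃) :
    componentProj (update j i₀ 2) ∘ₗ actDiag n (gfs (V₁ := V₁) f 1)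
      = componentProj (update j i₀ 2) + mapAt i₀ (offDiag₃₂ f) ∘ₗ componentProj j := by
  have hfactor : (fun i => projSummand K (update j i₀ 2 i) ∘ₗ (gfs (V₁ := V₁) f 1).toLinearMap)
      = update (fun i => projSummand K (j i)) i₀ (projSummand K 2 + offDiag₃₂ f) := by
    funext i
    rcases eq_or_ne i i₀ with rfl | hi
    · simp [projSummand_two_comp_gfs_one]
    · simp [hi, projSummand_comp_gfs_one_of_ne_two (hj2 i)]
  rw [componentProj, componentProj, actDiag, ← map_comp, hfactor, PiTensorProduct.map_update_add,
    mapAt_comp_map, hj1, offDiag₃₂_comp_projSummand_one]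
  congr 2
  exact (comp_update _ _ _ _).symm

theorem sum_mapAt_mapAt_componentProj {j : Fin n → Fin 3} {i₀ : Fin n} (hj1 : j i₀ = 1)
    {ι : Type*} [Fintype ι] {g : ι → V₃ →ₗ[K] V₂} {f : ι → V₂ →ₗ[K] V₃}
    (hgf : ∑ k, g k ∘ₗ f k = LinearMap.id) (x : ⨂[K] (_ : Fin n), (V₁ × V₂ × V₃)) :
    ∑ k, mapAt i₀ (offDiag₂₃ (V₁ := V₁) (g k)) (mapAt i₀ (offDiag₃₂ (f k)) (componentProj j x))
      = componentProj j x := by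
  have hP : mapAt i₀ (projSummand K 1 : (V₁ × V₂ × V₃) →ₗ[K] _) ∘ₗ componentProj j
      = componentProj j := by
    rw [componentProj, mapAt_comp_map, hj1, projSummand_comp_self, ← hj1, update_eq_self]
  calc _ = (mapAt i₀ (∑ k, offDiag₂₃ (g k) ∘ₗ offDiag₃₂ (f k)) ∘ₗ componentProj j) x := by
        simp_rw [← sum_mapAt, LinearMap.comp_apply, LinearMap.sum_apply, ← mapAt_comp_mapAt]
        rfl
    _ = componentProj j x := by rw [sum_offDiag₂₃_comp_offDiag₃₂ hgf, hP]

end Components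

theorem invariant_tensor_has_no_V2_components_general
    {K : Type*} [Field K] {V₁ V₂ V₃ : Type*}
    [AddCommGroup V₁] [Module K V₁]
    [AddCommGroup V₂] [Module K V₂] [FiniteDimensional K V₂]
    [AddCommGroup V₃] [Module K V₃]
    (Φ : AddSubgroup (V₂ →ₗ[K] V₃))
    (hsep : ∀ u : V₂, u ≠ 0 → ∃ f ∈ Φ, f u ≠ 0)
    {n : ℕ}
    (τ : ⨂[K] (_ : Fin n), (V₁ × V₂ × V₃))
    (hτ : ∀ f ∈ Φ, actDiag n (gfs f (1 : V₃ ≃ₗ[K] V₃)) τ = τ)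
    (c : (Fin n → Fin 3) → ⨂[K] (_ : Fin n), (V₁ × V₂ × V₃))
    (hc : ∀ j, c j ∈ Vstr j)
    (hsum : ∑ j : Fin n → Fin 3, c j = τ) :
    ∀ j : Fin n → Fin 3, (∀ i, j i ≠ 2) → (∃ i, j i = 1) → c j = 0 := by
  classical
  rintro j hj2 ⟨i₀, hj1⟩
  have hcj : c j = componentProj j τ := by rw [← hsum, componentProj_sum hc]
  have hkill : ∀ f ∈ Φ, mapAt i₀ (offDiag₃₂ f) (componentProj j τ) = 0 := by
    intro f hf
    have h := congrArg (componentProj (update j i₀ 2)) (hτ f hf)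
    rwa [← LinearMap.comp_apply, componentProj_update_comp_actDiag_gfs_one hj2 hj1,
      LinearMap.add_apply, LinearMap.comp_apply, add_eq_left] at h
  obtain ⟨s, hsΦ, hs⟩ := LinearMap.exists_finset_separating (Φ := (Φ : Set (V₂ →ₗ[K] V₃))) hsep
  obtain ⟨g, hg⟩ := LinearMap.exists_sum_comp_eq_id (f := fun k : s => k.1)
    fun u hu => hs u fun f hf => hu ⟨f, hf⟩
  rw [hcj, ← sum_mapAt_mapAt_componentProj hj1 hg]
  exact Finset.sum_eq_zero fun k _ => by rw [hkill k.1 (hsΦ k.2), map_zero]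

theorem invariant_tensor_has_no_V2_components
    {K : Type*} [Field K] {V₁ V₂ V₃ : Type*}
    [AddCommGroup V₁] [Module K V₁] [FiniteDimensional K V₁]
    [AddCommGroup V₂] [Module K V₂] [FiniteDimensional K V₂]
    [AddCommGroup V₃] [Module K V₃] [FiniteDimensional K V₃]
    (Gc : Subgroup (V₃ ≃ₗ[K] V₃)) (Φ : AddSubgroup (V₂ →ₗ[K] V₃))
    (hΦ : ∀ S ∈ Gc, ∀ f ∈ Φ, S.toLinearMap ∘ₗ f ∈ Φ)
    (hsep : ∀ u : V₂, u ≠ 0 → ∃ f ∈ Φ, f u ≠ 0)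
    {n : ℕ} (hn : 1 ≤ n)
    (τ : ⨂[K] (_ : Fin n), (V₁ × V₂ × V₃))
    (hτ : ∀ f ∈ Φ, actDiag n (gfs f (1 : V₃ ≃ₗ[K] V₃)) τ = τ)
    (c : (Fin n → Fin 3) → ⨂[K] (_ : Fin n), (V₁ × V₂ × V₃))
    (hc : ∀ j, c j ∈ Vstr j)
    (hsum : ∑ j : Fin n → Fin 3, c j = τ) :
    ∀ j : Fin n → Fin 3, (∀ i, j i ≠ 2) → (∃ i, j i = 1) → c j = 0 :=
  invariant_tensor_has_no_V2_components_general Φ hsep τ hτ c hc hsum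
end

section
/- For a string j ∈ {1,2,3}ⁿ let |j|₃ = #{ i : jᵢ = 3 }, and define the weight filtration on H^{⊗n} by W_k(H^{⊗n}) = ⊕_{ j : 2n − |j|₃ ≤ k } V(j). Then every element g of G, acting diagonally on H^{⊗n}, maps W_k(H^{⊗n}) into itself for every integer k; that is, the diagonal G-action preserves the weight filtration on the tensor power. (This is the abstract form of Lemma 2.3 of the paper — that a nonzero element of V(j₁…jₙ) has weight 2n − |j|₃ — combined with Lemma 2.6, the preservation of the weight filtration by the Mumford–Tate and Galois groups.) -/
/-!
Context: `K` a field, `V₁, V₂, V₃` finite-dimensional `K`-vector spaces,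
`H = V₁ × V₂ × V₃`, `G_c ≤ GL(V₃)`, `Φ ≤ Hom_K(V₂,V₃)` additive and stable under
composition with `G_c`, `g_{f,S} : (v₁,v₂,v₃) ↦ (v₁, v₂, f v₂ + S v₃)`,
`G = { g_{f,S} : f ∈ Φ, S ∈ G_c }`, acting diagonally on `H^{⊗n}`.  Strings
`j ∈ {1,2,3}ⁿ` are encoded as `j : Fin n → Fin 3` (`0` ↦ `V₁`, `1` ↦ `V₂`, `2` ↦ `V₃`),
so `|j|₃ = #{i : j i = 3}` becomes the cardinality of `{i | j i = 2}`.

Statement 10: with `W_k(H^{⊗n}) = ⊕_{j : 2n − |j|₃ ≤ k} V(j)`, every element `g` of `G`,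
acting diagonally on `H^{⊗n}`, maps `W_k(H^{⊗n})` into itself for every integer `k`.
-/

open scoped TensorProduct

/-!
Write `g_{f,S} v = (v₁, v₂, S v₃) + (0, 0, f v₂)`. The first summand keeps every `V_c` in place and
the second lands in `V₃`, so expanding `g^{⊗n}` of a pure tensor of type `j` multilinearly gives
pure tensors whose types arise from `j` by changing some letters to `3`; this can only increase
`|j|₃`, i.e. lower the weight `2n − |j|₃`.
-/

open Finset PiTensorProduct

theorem PiTensorProduct.tprod_add_mem_iSup_span_tprod_piecewise {R ι κ M : Type*}
    [CommSemiring R] [AddCommMonoid M] [Module R M] [Fintype ι] [DecidableEq ι]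
    (P : κ → Submodule R M) {a b : ι → M} {j j' : ι → κ}
    (ha : ∀ i, a i ∈ P (j i)) (hb : ∀ i, b i ∈ P (j' i)) :
    tprod R (a + b) ∈ ⨆ T : Finset ι,
      Submodule.span R {x | ∃ v : ι → M, (∀ i, v i ∈ P (T.piecewise j j' i)) ∧ x = tprod R v} := by
  rw [MultilinearMap.map_add_univ]
  refine Submodule.sum_mem _ fun T _ => Submodule.mem_iSup_of_mem T <|
    Submodule.subset_span ⟨T.piecewise a b, fun i => ?_, rfl⟩
  by_cases hi : i ∈ T
  · simpa [hi] using ha i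
  · simpa [hi] using hb i

section

variable {K : Type*} [Field K] {V₁ V₂ V₃ : Type*}
  [AddCommGroup V₁] [Module K V₁] [AddCommGroup V₂] [Module K V₂]
  [AddCommGroup V₃] [Module K V₃]

theorem gfs_apply_eq_add (f : V₂ →ₗ[K] V₃) (S : V₃ ≃ₗ[K] V₃) (v : V₁ × V₂ × V₃) :
    gfs f S v = (v.1, v.2.1, S v.2.2) + (0, 0, f v.2.1) := by
  simp [gfs, add_comm]

theorem zero_zero_mk_mem_sel_two (w : V₃) : ((0, 0, w) : V₁ × V₂ × V₃) ∈ sel K V₁ V₂ V₃ 2 := by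
  simp [sel]

theorem map_third_mem_sel (S : V₃ ≃ₗ[K] V₃) {c : Fin 3} {v : V₁ × V₂ × V₃}
    (hv : v ∈ sel K V₁ V₂ V₃ c) : (v.1, v.2.1, S v.2.2) ∈ sel K V₁ V₂ V₃ c := by
  fin_cases c <;> simp_all [sel]

theorem map_actDiag_gfs_Vstr_le {n : ℕ} (f : V₂ →ₗ[K] V₃) (S : V₃ ≃ₗ[K] V₃)
    (j : Fin n → Fin 3) :
    (Vstr (V₁ := V₁) j).map (actDiag n (gfs f S)) ≤
      ⨆ T : Finset (Fin n), Vstr (T.piecewise j fun _ => 2) := by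
  rw [Vstr, Submodule.map_span, Submodule.span_le]
  rintro _ ⟨_, ⟨v, hv, rfl⟩, rfl⟩
  have hsplit : (fun i => gfs f S (v i)) =
      (fun i => ((v i).1, (v i).2.1, S (v i).2.2)) + fun i => (0, 0, f (v i).2.1) := by
    ext1 i; exact gfs_apply_eq_add f S (v i)
  simp only [actDiag, map_tprod, LinearEquiv.coe_coe, hsplit]
  exact tprod_add_mem_iSup_span_tprod_piecewise _
    (fun i => map_third_mem_sel S (hv i)) fun i => zero_zero_mk_mem_sel_two _

end

theorem card_filter_eq_le_card_filter_piecewise {ι α : Type*} [Fintype ι] [DecidableEq ι]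
    [DecidableEq α] (T : Finset ι) (j : ι → α) (c : α) :
    #{i | j i = c} ≤ #{i | T.piecewise j (fun _ => c) i = c} := by
  refine card_le_card fun i => ?_
  by_cases hi : i ∈ T <;> simp [hi]

theorem diag_action_preserves_weight_filtration_general
    {K : Type*} [Field K] {V₁ V₂ V₃ : Type*}
    [AddCommGroup V₁] [Module K V₁]
    [AddCommGroup V₂] [Module K V₂]
    [AddCommGroup V₃] [Module K V₃]
    (Gc : Subgroup (V₃ ≃ₗ[K] V₃)) (Φ : AddSubgroup (V₂ →ₗ[K] V₃))
    {n : ℕ} (k : ℤ) :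
    ∀ g ∈ Gset Gc Φ,
      Submodule.map (actDiag n g)
        (⨆ j ∈ {j : Fin n → Fin 3 |
            (2 * n : ℤ) - ((Finset.univ.filter fun i => j i = 2).card : ℤ) ≤ k},
          Vstr (K := K) (V₁ := V₁) (V₂ := V₂) (V₃ := V₃) j)
      ≤ ⨆ j ∈ {j : Fin n → Fin 3 |
            (2 * n : ℤ) - ((Finset.univ.filter fun i => j i = 2).card : ℤ) ≤ k},
          Vstr (K := K) (V₁ := V₁) (V₂ := V₂) (V₃ := V₃) j := by
  rintro _ ⟨f, -, S, -, rfl⟩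
  simp only [Submodule.map_iSup]
  refine iSup₂_le fun j hj => (map_actDiag_gfs_Vstr_le f S j).trans <| iSup_le fun T => ?_
  have hweight := card_filter_eq_le_card_filter_piecewise T j 2
  exact le_iSup₂_of_le (T.piecewise j fun _ => 2) (by simp only [Set.mem_ofPred_eq] at hj ⊢; omega)
    le_rfl

theorem diag_action_preserves_weight_filtration
    {K : Type*} [Field K] {V₁ V₂ V₃ : Type*}
    [AddCommGroup V₁] [Module K V₁] [FiniteDimensional K V₁]
    [AddCommGroup V₂] [Module K V₂] [FiniteDimensional K V₂]
    [AddCommGroup V₃] [Module K V₃] [FiniteDimensional K V₃]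
    (Gc : Subgroup (V₃ ≃ₗ[K] V₃)) (Φ : AddSubgroup (V₂ →ₗ[K] V₃))
    (hΦ : ∀ S ∈ Gc, ∀ f ∈ Φ, S.toLinearMap ∘ₗ f ∈ Φ)
    {n : ℕ} (k : ℤ) :
    ∀ g ∈ Gset Gc Φ,
      Submodule.map (actDiag n g)
        (⨆ j ∈ {j : Fin n → Fin 3 |
            (2 * n : ℤ) - ((Finset.univ.filter fun i => j i = 2).card : ℤ) ≤ k},
          Vstr (K := K) (V₁ := V₁) (V₂ := V₂) (V₃ := V₃) j)
      ≤ ⨆ j ∈ {j : Fin n → Fin 3 |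
            (2 * n : ℤ) - ((Finset.univ.filter fun i => j i = 2).card : ℤ) ≤ k},
          Vstr (K := K) (V₁ := V₁) (V₂ := V₂) (V₃ := V₃) j :=
  diag_action_preserves_weight_filtration_general Gc Φ k
end
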